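/- For every $n\in\mathbb N$, the set $C_n$ is contained in $M_{n+1}\setminus M_n$. -/

import Mathlib

/-! A point `z` of `f(s_{n+1}B) \ f(s_n B)` has a coordinate `γ₀ ∈ Γ_n` with `|z(γ₀)| > s_n`.
Its lift `w` to `Γ_{n+1}` keeps that coordinate, while every element of `M_n` is bounded by `s_n`
on `Γ_n`. Hence `w` is not the restriction of an element of `M_n`, so `f(i_{n+1} w)` is added at
step `n + 1`; and `f(i_{n+1} w)` still takes the value `z(γ₀)` at `γ₀`, so it was not in `M_n`. -/

open Set

noncomputable section

variable {Γ : Type*} [TopologicalSpace Γ] [DiscreteTopology Γ]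

/-- `ℓ∞(Γ)`: the Banach space of bounded real functions on `Γ`
(carrying the discrete topology, so that boundedness is the only constraint). -/
abbrev Linf (Γ : Type*) [TopologicalSpace Γ] [DiscreteTopology Γ] : Type _ :=
  BoundedContinuousFunction Γ ℝ

/-- The entire part of a real number, toward `0`: `[r] = sign(r)⌊|r|⌋`. -/
def ent (r : ℝ) : ℝ := Real.sign r * ⌊|r|⌋

lemma abs_ent_le (r : ℝ) : |ent r| ≤ |r| := by
  have hsign : |Real.sign r| ≤ 1 := by
    rcases lt_trichotomy r 0 with h | h | h
    · rw [Real.sign_of_neg h]; norm_num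
    · rw [h, Real.sign_zero]; norm_num
    · rw [Real.sign_of_pos h]; norm_num
  have hfl : |(⌊|r|⌋ : ℝ)| ≤ |r| := by
    rw [abs_of_nonneg (by exact_mod_cast Int.floor_nonneg.mpr (abs_nonneg r))]
    exact Int.floor_le _
  calc |ent r| = |Real.sign r| * |(⌊|r|⌋ : ℝ)| := abs_mul _ _
    _ ≤ 1 * |r| := mul_le_mul hsign hfl (abs_nonneg _) zero_le_one
    _ = |r| := one_mul _

/-- The coordinatewise quantization `f : ℓ∞(S) → ℓ∞(S)`, `f(x)(γ) = [x(γ)]`. -/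
def quant (x : Linf Γ) : Linf Γ :=
  BoundedContinuousFunction.ofNormedAddCommGroup (fun γ => ent (x γ))
    continuous_of_discreteTopology ‖x‖ (fun γ => by
      rw [Real.norm_eq_abs]
      exact (abs_ent_le (x γ)).trans (by simpa using x.norm_coe_le_norm γ))

/-- Scalar truncation at level `s`. -/
def truncFun (s t : ℝ) : ℝ := if |t| ≤ s then t else s * t / |t|

lemma abs_truncFun_le (s t : ℝ) : |truncFun s t| ≤ max |s| |t| := by
  unfold truncFun
  split_ifs with h
  · exact le_max_right _ _
  · by_cases ht : t = 0
    · simp [ht]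
    · have hst : abs (s * t / |t|) = |s| := by
        rw [abs_div, abs_mul, abs_abs, mul_div_assoc, div_self (abs_ne_zero.mpr ht), mul_one]
      rw [hst]; exact le_max_left _ _

/-- The truncation of radius `s`: `T_s(x)(γ) = x(γ)` if `|x(γ)| ≤ s`,
and `= s·x(γ)/|x(γ)|` otherwise. -/
def trunc (s : ℝ) (x : Linf Γ) : Linf Γ :=
  BoundedContinuousFunction.ofNormedAddCommGroup (fun γ => truncFun s (x γ))
    continuous_of_discreteTopology (max |s| ‖x‖) (fun γ => by
      rw [Real.norm_eq_abs]
      exact (abs_truncFun_le s (x γ)).trans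
        (max_le_max le_rfl (by simpa using x.norm_coe_le_norm γ)))

/-- The restriction operator `r_S : ℓ∞(Γ) → ℓ∞(S)`, where `ℓ∞(S)` is identified
isometrically with the subspace of `ℓ∞(Γ)` of functions vanishing off `S`. -/
def restr (S : Set Γ) (x : Linf Γ) : Linf Γ :=
  BoundedContinuousFunction.ofNormedAddCommGroup (S.indicator x)
    continuous_of_discreteTopology ‖x‖ (fun γ => by
      rw [Real.norm_eq_abs]
      by_cases h : γ ∈ S
      · rw [Set.indicator_of_mem h]
        simpa using x.norm_coe_le_norm γ
      · rw [Set.indicator_of_notMem h]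
        simp)

/-- The ball `s·B_{ℓ∞(S)}`, viewed inside `ℓ∞(Γ)`: functions supported on `S`
of norm at most `s`. -/
def suppBall (S : Set Γ) (s : ℝ) : Set (Linf Γ) :=
  {x | (∀ γ ∉ S, x γ = 0) ∧ ‖x‖ ≤ s}

/-- `chain T a b = T (a+1) ∘ ⋯ ∘ T b` (the identity if `b ≤ a`). -/
def chain {α : Type*} (T : ℕ → α → α) (a b : ℕ) : α → α :=
  Nat.rec id (fun k ih => ih ∘ T (a + k + 1)) (b - a)

/-- Bourgain–Delbaen data on `Γ`: a strictly increasing sequence of nonempty finite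
sets `Γs n` (for `n ≥ 1`) with union `Γ`, together with compatible bounded linear
extension operators `i n : ℓ∞(Γ_n) → ℓ∞(Γ)` (realized as operators on `ℓ∞(Γ)`
factoring through the restriction `restr (Γs n)`), with norms bounded by the
positive integer `lam`. -/
structure BD (Γ : Type*) [TopologicalSpace Γ] [DiscreteTopology Γ] where
  Γs : ℕ → Set Γ
  lam : ℕ
  i : ℕ → Linf Γ →L[ℝ] Linf Γ
  one_le_lam : 1 ≤ lam
  finite : ∀ n, 1 ≤ n → (Γs n).Finite
  nonempty : ∀ n, 1 ≤ n → (Γs n).Nonempty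
  ssubset : ∀ n, 1 ≤ n → Γs n ⊂ Γs (n + 1)
  iUnion_eq : ⋃ n ∈ {k : ℕ | 1 ≤ k}, Γs n = Set.univ
  extension : ∀ n, 1 ≤ n → ∀ x : Linf Γ, ∀ γ ∈ Γs n, i n x γ = x γ
  factor : ∀ n, 1 ≤ n → ∀ x : Linf Γ, i n (restr (Γs n) x) = i n x
  compatible : ∀ n m, 1 ≤ n → n < m → ∀ x : Linf Γ, i m (restr (Γs m) (i n x)) = i n x
  norm_i_le : ∀ n, 1 ≤ n → ‖i n‖ ≤ (lam : ℝ)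

namespace BD

/-- `s n = λ^n`. -/
def s (B : BD Γ) (n : ℕ) : ℝ := (B.lam : ℝ) ^ n

/-- The sets `M_n` (with `M_0 = ∅`):
`M_n = M_{n-1} ∪ (f ∘ i_n)(f(s_n B_{ℓ∞(Γ_n)}) \ r_n(M_{n-1}))`. -/
def M (B : BD Γ) : ℕ → Set (Linf Γ)
  | 0 => ∅
  | n + 1 =>
      M B n ∪
        (fun z => quant (B.i (n + 1) z)) ''
          (quant '' suppBall (B.Γs (n + 1)) (B.s (n + 1)) \ restr (B.Γs (n + 1)) '' M B n)

/-- `M = ⋃ n, M_n`. -/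
def Mtot (B : BD Γ) : Set (Linf Γ) := ⋃ n, B.M n

/-- `C_n = (f ∘ i_{n+1} ∘ f ∘ T_{s_{n+1}} ∘ r_{n+1} ∘ i_n)
(f(s_{n+1}B_{ℓ∞(Γ_n)}) \ f(s_n B_{ℓ∞(Γ_n)}))`. -/
def C (B : BD Γ) (n : ℕ) : Set (Linf Γ) :=
  (fun z => quant (B.i (n + 1) (quant (trunc (B.s (n + 1)) (restr (B.Γs (n + 1)) (B.i n z)))))) ''
    (quant '' suppBall (B.Γs n) (B.s (n + 1)) \ quant '' suppBall (B.Γs n) (B.s n))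

/-- `D_n = M_n ∪ C_n`. -/
def D (B : BD Γ) (n : ℕ) : Set (Linf Γ) := B.M n ∪ B.C n

end BD

lemma ent_intCast (k : ℤ) : ent (k : ℝ) = k := by
  rw [ent, ← Int.cast_abs, Int.floor_intCast, Real.sign_intCast, ← Int.cast_mul, Int.sign_mul_abs]

lemma exists_ent_eq_intCast (r : ℝ) : ∃ k : ℤ, ent r = k := by
  rcases Real.sign_apply_eq r with h | h | h <;> rw [ent, h]
  exacts [⟨-⌊|r|⌋, by push_cast; ring⟩, ⟨0, by simp⟩, ⟨⌊|r|⌋, by simp⟩]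

lemma ent_ent (r : ℝ) : ent (ent r) = ent r := by
  obtain ⟨k, hk⟩ := exists_ent_eq_intCast r
  rw [hk, ent_intCast]

lemma truncFun_of_abs_le {s t : ℝ} (h : |t| ≤ s) : truncFun s t = t := if_pos h

lemma abs_truncFun_le_of_nonneg {s : ℝ} (hs : 0 ≤ s) (t : ℝ) : |truncFun s t| ≤ s := by
  by_cases h : |t| ≤ s
  · rwa [truncFun_of_abs_le h]
  · have ht : t ≠ 0 := by rintro rfl; simp [hs] at h
    rw [truncFun, if_neg h, abs_div, abs_mul, abs_abs, abs_of_nonneg hs, mul_div_assoc,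
      div_self (abs_ne_zero.mpr ht), mul_one]

@[simp] lemma quant_apply (x : Linf Γ) (γ : Γ) : quant x γ = ent (x γ) := rfl

@[simp] lemma trunc_apply (s : ℝ) (x : Linf Γ) (γ : Γ) : trunc s x γ = truncFun s (x γ) := rfl

@[simp] lemma restr_apply (S : Set Γ) (x : Linf Γ) (γ : Γ) :
    restr S x γ = S.indicator x γ := rfl

lemma abs_apply_le_norm (x : Linf Γ) (γ : Γ) : |x γ| ≤ ‖x‖ := by
  simpa using x.norm_coe_le_norm γ

lemma norm_quant_le (x : Linf Γ) : ‖quant x‖ ≤ ‖x‖ :=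
  (BoundedContinuousFunction.norm_le (norm_nonneg x)).2 fun γ =>
    (abs_ent_le (x γ)).trans (abs_apply_le_norm x γ)

lemma mem_quant_image_suppBall_iff {S : Set Γ} {s : ℝ} {z : Linf Γ} :
    z ∈ quant '' suppBall S s ↔ (∀ γ ∉ S, z γ = 0) ∧ ‖z‖ ≤ s ∧ ∀ γ, ent (z γ) = z γ := by
  constructor
  · rintro ⟨x, ⟨hsupp, hnorm⟩, rfl⟩
    exact ⟨fun γ hγ => by simp [hsupp γ hγ, ent], (norm_quant_le x).trans hnorm,
      fun γ => ent_ent (x γ)⟩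
  · rintro ⟨hsupp, hnorm, hfix⟩
    exact ⟨z, ⟨hsupp, hnorm⟩, BoundedContinuousFunction.ext hfix⟩

lemma exists_lt_abs_of_mem_quant_image_of_notMem {S : Set Γ} {s t : ℝ} (hs : 0 ≤ s)
    {z : Linf Γ} (hzt : z ∈ quant '' suppBall S t) (hzs : z ∉ quant '' suppBall S s) :
    ∃ γ ∈ S, s < |z γ| := by
  obtain ⟨hsupp, -, hfix⟩ := mem_quant_image_suppBall_iff.1 hzt
  by_contra! hle
  refine hzs (mem_quant_image_suppBall_iff.2 ⟨hsupp, ?_, hfix⟩)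
  refine (BoundedContinuousFunction.norm_le hs).2 fun γ => ?_
  by_cases hγ : γ ∈ S
  · exact hle γ hγ
  · simpa [hsupp γ hγ] using hs

namespace BD

variable (B : BD Γ)

lemma s_nonneg (n : ℕ) : 0 ≤ B.s n := pow_nonneg (Nat.cast_nonneg _) n

lemma s_mono {m n : ℕ} (h : m ≤ n) : B.s m ≤ B.s n :=
  pow_le_pow_right₀ (by exact_mod_cast B.one_le_lam) h

lemma lam_mul_s (n : ℕ) : (B.lam : ℝ) * B.s n = B.s (n + 1) := by
  rw [s, s, pow_succ, mul_comm]

lemma exists_eq_quant_i_of_mem_M {n : ℕ} {v : Linf Γ} (hv : v ∈ B.M n) :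
    ∃ m u, 1 ≤ m ∧ m ≤ n ∧ u ∈ quant '' suppBall (B.Γs m) (B.s m) ∧ v = quant (B.i m u) := by
  induction n with
  | zero => exact absurd hv (by simp [M])
  | succ n ih =>
    rcases hv with hv | ⟨u, hu, rfl⟩
    · obtain ⟨m, u, hm, hmn, hu, rfl⟩ := ih hv
      exact ⟨m, u, hm, hmn.trans n.le_succ, hu, rfl⟩
    · exact ⟨n + 1, u, n.succ_pos, le_rfl, hu.1, rfl⟩

lemma quant_i_apply_of_mem {m : ℕ} (hm : 1 ≤ m) {u : Linf Γ} (hu : ∀ γ, ent (u γ) = u γ)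
    {γ : Γ} (hγ : γ ∈ B.Γs m) : quant (B.i m u) γ = u γ := by
  rw [quant_apply, B.extension m hm u γ hγ, hu]

lemma norm_quant_i_le {m : ℕ} (hm : 1 ≤ m) {u : Linf Γ}
    (hu : u ∈ quant '' suppBall (B.Γs m) (B.s m)) : ‖quant (B.i m u)‖ ≤ B.s (m + 1) :=
  calc ‖quant (B.i m u)‖ ≤ ‖B.i m u‖ := norm_quant_le _
    _ ≤ ‖B.i m‖ * ‖u‖ := (B.i m).le_opNorm u
    _ ≤ B.lam * B.s m := mul_le_mul (B.norm_i_le m hm) (mem_quant_image_suppBall_iff.1 hu).2.1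
        (norm_nonneg u) (Nat.cast_nonneg _)
    _ = B.s (m + 1) := B.lam_mul_s m

/-- An element created at step `n` agrees on `Γ_n` with an integer vector of norm `≤ s_n`;
one created at an earlier step `m` has norm `≤ λ s_m ≤ s_n`. -/
lemma abs_apply_le_s_of_mem_M {n : ℕ} {v : Linf Γ} (hv : v ∈ B.M n) {γ : Γ}
    (hγ : γ ∈ B.Γs n) : |v γ| ≤ B.s n := by
  obtain ⟨m, u, hm, hmn, hu, rfl⟩ := B.exists_eq_quant_i_of_mem_M hv
  obtain ⟨-, hnorm, hfix⟩ := mem_quant_image_suppBall_iff.1 hu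
  rcases hmn.eq_or_lt with rfl | hlt
  · rw [B.quant_i_apply_of_mem hm hfix hγ]
    exact (abs_apply_le_norm u γ).trans hnorm
  · exact (abs_apply_le_norm _ γ).trans ((B.norm_quant_i_le hm hu).trans (B.s_mono hlt))

/-- The vector `f ∘ T_{s_{n+1}} ∘ r_{n+1} ∘ i_n (z)`, which `f ∘ i_{n+1}` maps into `C_n`. -/
def lift (n : ℕ) (z : Linf Γ) : Linf Γ :=
  quant (trunc (B.s (n + 1)) (restr (B.Γs (n + 1)) (B.i n z)))

lemma lift_mem (n : ℕ) (z : Linf Γ) :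
    B.lift n z ∈ quant '' suppBall (B.Γs (n + 1)) (B.s (n + 1)) := by
  refine ⟨_, ⟨fun γ hγ => ?_, ?_⟩, rfl⟩
  · simp [Set.indicator_of_notMem hγ, truncFun, B.s_nonneg]
  · exact (BoundedContinuousFunction.norm_le (B.s_nonneg _)).2 fun γ =>
      abs_truncFun_le_of_nonneg (B.s_nonneg _) _

lemma lift_apply_of_mem {n : ℕ} (hn : 1 ≤ n) {z : Linf Γ}
    (hz : z ∈ quant '' suppBall (B.Γs n) (B.s (n + 1))) {γ : Γ} (hγ : γ ∈ B.Γs n) :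
    B.lift n z γ = z γ := by
  obtain ⟨-, hnorm, hfix⟩ := mem_quant_image_suppBall_iff.1 hz
  rw [lift, quant_apply, trunc_apply, restr_apply,
    Set.indicator_of_mem ((B.ssubset n hn).subset hγ), B.extension n hn z γ hγ,
    truncFun_of_abs_le ((abs_apply_le_norm z γ).trans hnorm), hfix]

lemma C_eq_image_lift (n : ℕ) : B.C n = (fun z => quant (B.i (n + 1) (B.lift n z))) ''
    (quant '' suppBall (B.Γs n) (B.s (n + 1)) \ quant '' suppBall (B.Γs n) (B.s n)) := rfl

end BD

/-- Lemma 5 (`contCB`): `C_n ⊆ M_{n+1} \ M_n` for every `n ∈ ℕ`. -/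
theorem C_subset_M_diff (B : BD Γ) (n : ℕ) (hn : 1 ≤ n) :
    B.C n ⊆ B.M (n + 1) \ B.M n := by
  rw [B.C_eq_image_lift]
  rintro - ⟨z, ⟨hz, hz'⟩, rfl⟩
  obtain ⟨γ₀, hγ₀, hbig⟩ := exists_lt_abs_of_mem_quant_image_of_notMem (B.s_nonneg n) hz hz'
  have hγ₀' : γ₀ ∈ B.Γs (n + 1) := (B.ssubset n hn).subset hγ₀
  have hw := B.lift_mem n z
  have hwγ₀ : B.lift n z γ₀ = z γ₀ := B.lift_apply_of_mem hn hz hγ₀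
  have hM : ∀ v ∈ B.M n, v γ₀ ≠ z γ₀ := fun v hv heq =>
    (B.abs_apply_le_s_of_mem_M hv hγ₀).not_gt (heq ▸ hbig)
  refine ⟨Or.inr ⟨B.lift n z, ⟨hw, ?_⟩, rfl⟩, fun hmem => hM _ hmem ?_⟩
  · rintro ⟨v, hv, hvw⟩
    refine hM v hv ?_
    rw [← hwγ₀, ← hvw, restr_apply, Set.indicator_of_mem hγ₀']
  · rw [B.quant_i_apply_of_mem n.succ_pos (mem_quant_image_suppBall_iff.1 hw).2.2 hγ₀', hwγ₀]
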